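/- arXiv:1307.4382 — 3 statements merged into one kernel-verified Lean document; each statement's English description precedes it below -/
import Mathlib

section
/- Let X be a real Banach space which is a 𝒦-space with constant K, and let F : X → c₀ be a quasilinear map with constant 1. Then for every finite family x₁, …, xₙ ∈ X one has ‖F(x₁ + ⋯ + xₙ) − (F(x₁) + ⋯ + F(xₙ))‖_∞ ≤ 2K(‖x₁‖ + ⋯ + ‖xₙ‖). -/
open Finset

/-- The Banach space `c₀` of real null sequences with the sup norm. -/
abbrev NullSeq : Type := ZeroAtInftyContinuousMap ℕ ℝ

/-- `F : X → Y` is quasilinear with constant `Q`. -/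
def IsQuasilinearWith {X Y : Type*} [NormedAddCommGroup X] [NormedSpace ℝ X]
    [NormedAddCommGroup Y] [NormedSpace ℝ Y] (Q : ℝ) (F : X → Y) : Prop :=
  (∀ (c : ℝ) (x : X), F (c • x) = c • F x) ∧
    ∀ x y : X, ‖F (x + y) - F x - F y‖ ≤ Q * (‖x‖ + ‖y‖)

/-- `X` is a 𝒦-space with constant `K`: every real-valued homogeneous map with
quasilinearity constant 1 is at distance at most `K` from a (not necessarily
continuous) linear functional. -/
def IsKSpaceWith (K : ℝ) (X : Type*) [NormedAddCommGroup X] [NormedSpace ℝ X] : Prop :=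
  ∀ f : X → ℝ, (∀ (c : ℝ) (x : X), f (c • x) = c * f x) →
    (∀ x y : X, |f (x + y) - f x - f y| ≤ ‖x‖ + ‖y‖) →
    ∃ ℓ : X →ₗ[ℝ] ℝ, ∀ x : X, |f x - ℓ x| ≤ K * ‖x‖

lemma nullseq_abs_apply_le_norm (g : NullSeq) (k : ℕ) : |g k| ≤ ‖g‖ := by
  rw [← ZeroAtInftyContinuousMap.norm_toBCF_eq_norm]
  exact g.toBCF.norm_coe_le_norm k

lemma nullseq_norm_le (g : NullSeq) (C : ℝ) (hC : 0 ≤ C) (h : ∀ k, |g k| ≤ C) : ‖g‖ ≤ C := by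
  rw [← ZeroAtInftyContinuousMap.norm_toBCF_eq_norm]
  exact (BoundedContinuousFunction.norm_le hC).2 h

/-- on a 𝒦-space with constant `K`, every quasilinear map into `c₀` with
constant 1 satisfies the finite-sum estimate with constant `2K`. -/
theorem finite_sum_estimate_of_KSpace {X : Type*} [NormedAddCommGroup X]
    [NormedSpace ℝ X] [CompleteSpace X] (K : ℝ) (hX : IsKSpaceWith K X)
    (F : X → NullSeq) (hF : IsQuasilinearWith 1 F)
    (n : ℕ) (x : Fin n → X) :
    ‖F (∑ i, x i) - ∑ i, F (x i)‖ ≤ 2 * K * ∑ i, ‖x i‖ := by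
  obtain ⟨hhom, hq⟩ := hF
  have hF0 : F 0 = 0 := by
    have := hhom 0 0
    simpa using this
  rcases eq_or_lt_of_le (Finset.sum_nonneg (fun i _ => norm_nonneg (x i)) :
      (0:ℝ) ≤ ∑ i, ‖x i‖) with hs | hs
  · -- all x i = 0
    have hall : ∀ i, x i = 0 := by
      intro i
      have := (Finset.sum_eq_zero_iff_of_nonneg
        (fun i _ => norm_nonneg (x i))).1 hs.symm i (Finset.mem_univ i)
      simpa using this
    simp [hall, hF0]
  · -- there is a nonzero vector, so K ≥ 0
    have hx0 : ∃ x0 : X, x0 ≠ 0 := by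
      by_contra h
      push_neg at h
      have : (∑ i, ‖x i‖ : ℝ) = 0 := by simp [h]
      linarith
    have hK : 0 ≤ K := by
      obtain ⟨x0, hx0⟩ := hx0
      obtain ⟨ℓ, hℓ⟩ := hX (fun _ => 0) (by simp) (by simp [norm_nonneg, add_nonneg])
      have := hℓ x0
      have hx0n : 0 < ‖x0‖ := norm_pos_iff.2 hx0
      nlinarith [abs_nonneg (0 - ℓ x0)]
    -- coordinate functionals
    have key : ∀ k : ℕ, |(F (∑ i, x i)) k - ∑ i, (F (x i)) k| ≤ 2 * K * ∑ i, ‖x i‖ := by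
      intro k
      set f : X → ℝ := fun z => (F z) k with hf
      have fhom : ∀ (c : ℝ) (z : X), f (c • z) = c * f z := by
        intro c z
        simp [f, hhom c z]
      have fq : ∀ z w : X, |f (z + w) - f z - f w| ≤ ‖z‖ + ‖w‖ := by
        intro z w
        have h1 : |f (z + w) - f z - f w| ≤ ‖F (z + w) - F z - F w‖ := by
          have := nullseq_abs_apply_le_norm (F (z + w) - F z - F w) k
          simpa [f] using this
        have := hq z w
        linarith
      obtain ⟨ℓ, hℓ⟩ := hX f fhom fq
      have hsum : (∑ i, (F (x i)) k) = ∑ i, f (x i) := rfl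
      have h1 : |f (∑ i, x i) - ℓ (∑ i, x i)| ≤ K * ‖∑ i, x i‖ := hℓ _
      have h2 : |∑ i, (f (x i) - ℓ (x i))| ≤ ∑ i, K * ‖x i‖ :=
        (Finset.abs_sum_le_sum_abs _ _).trans (Finset.sum_le_sum fun i _ => hℓ (x i))
      have hℓsum : ℓ (∑ i, x i) = ∑ i, ℓ (x i) := map_sum ℓ _ _
      have h3 : ‖∑ i, x i‖ ≤ ∑ i, ‖x i‖ := norm_sum_le _ _
      have h4 : K * ‖∑ i, x i‖ ≤ K * ∑ i, ‖x i‖ := mul_le_mul_of_nonneg_left h3 hK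
      have h5 : (∑ i, K * ‖x i‖) = K * ∑ i, ‖x i‖ := (Finset.mul_sum _ _ _).symm
      have expand : f (∑ i, x i) - ∑ i, f (x i) =
          (f (∑ i, x i) - ℓ (∑ i, x i)) - ∑ i, (f (x i) - ℓ (x i)) := by
        rw [Finset.sum_sub_distrib, hℓsum]; ring
      calc |(F (∑ i, x i)) k - ∑ i, (F (x i)) k|
          = |f (∑ i, x i) - ∑ i, f (x i)| := by rw [hsum]
        _ ≤ |f (∑ i, x i) - ℓ (∑ i, x i)| + |∑ i, (f (x i) - ℓ (x i))| := by
            rw [expand]; exact abs_sub _ _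
        _ ≤ K * ∑ i, ‖x i‖ + K * ∑ i, ‖x i‖ := by
            rw [h5] at h2
            linarith [h2, h1.trans h4]
        _ = 2 * K * ∑ i, ‖x i‖ := by ring
    apply nullseq_norm_le
    · positivity
    · intro k
      have hsa : (∑ i, F (x i)) k = ∑ i, (F (x i)) k :=
        map_sum (⟨⟨fun h : NullSeq => h k, rfl⟩, fun _ _ => rfl⟩ : NullSeq →+ ℝ) _ _
      have := key k
      rw [ZeroAtInftyContinuousMap.coe_sub, Pi.sub_apply, hsa]
      exact this
end

section
/- Let X be a weakly compactly generated real Banach space which is a 𝒦-space with constant K. Then every bounded quasilinear map F : X → c₀ with constant 1 admits a (not necessarily continuous) linear map L : X → c₀ such that ‖F(x) − L(x)‖_∞ ≤ 2(2K+1)‖x‖ for all x ∈ X. In particular K₀(X, c₀) is finite. -/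
open Finset

/-- `X` is weakly compactly generated: it contains a weakly compact subset whose
linear span is dense. -/
def IsWCG (X : Type*) [NormedAddCommGroup X] [NormedSpace ℝ X] : Prop :=
  ∃ s : Set X, IsCompact (toWeakSpace ℝ X '' s) ∧
    Dense (↑(Submodule.span ℝ s) : Set X)

/-!
Each coordinate `x ↦ F x n` is a real quasilinear map, so the 𝒦-space property gives linear
functionals `ℓ n` with `|F x n - ℓ n x| ≤ K‖x‖`. Since `F` is bounded the `ℓ n` are uniformly
bounded, and since `F x ∈ c₀` we have `limsup |ℓ n x| ≤ K‖x‖`. The weak* closure of `{ℓ n}` is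
compact, and it is metrizable because `X` is WCG: its elements factor through
`x ↦ (ℓ n x)ₙ`, which maps the weakly compact generating set onto a separable set. Taking for
each `n` a nearest weak* cluster point `g n` of `(ℓ n)` gives `|g n x| ≤ K‖x‖` and
`ℓ n x - g n x → 0`, so `L x = (ℓ n x - g n x)ₙ` lies in `c₀` and `‖F x - L x‖ ≤ 2K‖x‖`.
-/

open Filter Topology Set Uniformity

theorem IsCompact.exists_countable_eqOn_of_factorsThrough {W Y Z : Type*} [TopologicalSpace W]
    [TopologicalSpace Y] [TopologicalSpace.MetrizableSpace Y] [TopologicalSpace Z] [T2Space Z]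
    {K : Set W} (hK : IsCompact K) {e : W → Y} (he : ContinuousOn e K) :
    ∃ Q ⊆ K, Q.Countable ∧ ∀ δ δ' : W → Z, ContinuousOn δ K → ContinuousOn δ' K →
      δ.FactorsThrough e → δ'.FactorsThrough e → EqOn δ δ' Q → EqOn δ δ' K := by
  obtain ⟨t, htK, htc, hKt⟩ :=
    (hK.image_of_continuousOn he).isSeparable.exists_countable_dense_subset
  choose σ hσK hσe using fun y : t => htK y.2
  have := htc.to_subtype
  refine ⟨range σ, range_subset_iff.2 hσK, countable_range σ,
    fun δ δ' hδ hδ' hfac hfac' hQ w hw => ?_⟩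
  have hA : IsCompact (K ∩ {w | δ w = δ' w}) := by
    have := isCompact_iff_compactSpace.mp hK
    have hc : IsClosed {w : K | δ w = δ' w} := isClosed_eq hδ.domRestrict hδ'.domRestrict
    have : IsCompact (((↑) : K → W) '' ((↑) ⁻¹' {w | δ w = δ' w})) :=
      hc.isCompact.image continuous_subtype_val
    rwa [Subtype.image_preimage_coe] at this
  have htA : t ⊆ e '' (K ∩ {w | δ w = δ' w}) := fun y hy =>
    ⟨σ ⟨y, hy⟩, ⟨hσK _, hQ (mem_range_self _)⟩, hσe _⟩
  obtain ⟨a, ⟨haK, ha⟩, hae⟩ :=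
    closure_minimal htA ((hA.image_of_continuousOn (he.mono inter_subset_left)).isClosed)
      (hKt (mem_image_of_mem e hw))
  rw [← hfac hae, ← hfac' hae]
  exact ha

theorem exists_mapClusterPt_tendsto_sub {T : Type*} [TopologicalSpace T] [CompactSpace T]
    [TopologicalSpace.MetrizableSpace T] (u : ℕ → T) :
    ∃ γ : ℕ → T, (∀ n, MapClusterPt (γ n) atTop u) ∧
      ∀ f : T → ℝ, Continuous f → Tendsto (fun n => f (u n) - f (γ n)) atTop (𝓝 0) := by
  let := TopologicalSpace.metrizableSpaceMetric T
  set D := {a | MapClusterPt a atTop u}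
  have hD : IsCompact D := isClosed_setOfPred_clusterPt.isCompact
  obtain ⟨a, -, ha⟩ := isCompact_univ.exists_mapClusterPt (f := atTop) (u := u) (by simp)
  choose γ hγD hγ using fun n => hD.exists_infDist_eq_dist ⟨a, ha⟩ (u n)
  refine ⟨γ, hγD, fun f hf => ?_⟩
  have hinf : Tendsto (fun n => Metric.infDist (u n) D) atTop (𝓝 0) := by
    refine tendsto_order.2 ⟨fun c hc => .of_forall fun n => hc.trans_le Metric.infDist_nonneg,
      fun ε hε => isCompact_univ.adherence_nhdset (f := map u atTop) (by simp)
        (isOpen_lt (Metric.continuous_infDist_pt D) continuous_const) fun b _ hb => ?_⟩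
    simpa [Metric.infDist_zero_of_mem (show b ∈ D from hb)] using hε
  have hclose : Tendsto (fun n => (u n, γ n)) atTop (𝓤 T) :=
    tendsto_uniformity_iff_dist_tendsto_zero.2 (by simpa only [hγ] using hinf)
  have := Tendsto.comp (CompactSpace.uniformContinuous_of_continuous hf) hclose
  rw [tendsto_uniformity_iff_dist_tendsto_zero] at this
  rw [tendsto_zero_iff_abs_tendsto_zero]
  simpa [Function.comp_def, Real.dist_eq] using this

namespace NullSeq

theorem abs_apply_le_norm (g : NullSeq) (n : ℕ) : |g n| ≤ ‖g‖ := by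
  simpa [ZeroAtInftyContinuousMap.norm_toBCF_eq_norm] using g.toBCF.norm_coe_le_norm n

theorem norm_le_of_forall_abs_le {g : NullSeq} {b : ℝ} (hb : 0 ≤ b) (h : ∀ n, |g n| ≤ b) :
    ‖g‖ ≤ b := by
  rw [← ZeroAtInftyContinuousMap.norm_toBCF_eq_norm]
  exact (BoundedContinuousFunction.norm_le hb).2 h

theorem tendsto_atTop (g : NullSeq) : Tendsto g atTop (𝓝 0) := by
  simpa using g.zero_at_infty'

def ofTendsto (a : ℕ → ℝ) (h : Tendsto a atTop (𝓝 0)) : NullSeq :=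
  ⟨⟨a, continuous_of_discreteTopology⟩, by simpa using h⟩

def linearMapOfTendsto {E : Type*} [AddCommGroup E] [Module ℝ E] (φ : ℕ → E →ₗ[ℝ] ℝ)
    (h : ∀ x, Tendsto (fun n => φ n x) atTop (𝓝 0)) : E →ₗ[ℝ] NullSeq where
  toFun x := ofTendsto (fun n => φ n x) (h x)
  map_add' x y := by ext n; simp [ofTendsto]
  map_smul' c x := by ext n; simp [ofTendsto]

@[simp]
theorem linearMapOfTendsto_apply {E : Type*} [AddCommGroup E] [Module ℝ E]
    (φ : ℕ → E →ₗ[ℝ] ℝ) (h : ∀ x, Tendsto (fun n => φ n x) atTop (𝓝 0)) (x : E) (n : ℕ) :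
    linearMapOfTendsto φ h x n = φ n x :=
  rfl

end NullSeq

section

variable {X : Type*} [NormedAddCommGroup X] [NormedSpace ℝ X]

theorem continuous_comp_toWeakSpace_symm (φ : StrongDual ℝ X) :
    Continuous fun v : WeakSpace ℝ X => φ ((toWeakSpace ℝ X).symm v) :=
  WeakBilin.eval_continuous _ φ

theorem IsWCG.exists_countable_eq_of_eqOn_of_factorsThrough (hX : IsWCG X)
    (ℓ : ℕ → StrongDual ℝ X) :
    ∃ Q : Set X, Q.Countable ∧ ∀ φ ψ : StrongDual ℝ X,
      (⇑φ).FactorsThrough (fun x n => ℓ n x) → (⇑ψ).FactorsThrough (fun x n => ℓ n x) →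
      EqOn φ ψ Q → φ = ψ := by
  obtain ⟨s, hsc, hsd⟩ := hX
  obtain ⟨Q, -, hQc, hQ⟩ := hsc.exists_countable_eqOn_of_factorsThrough (Z := ℝ)
    (continuous_pi fun n => continuous_comp_toWeakSpace_symm (ℓ n)).continuousOn
  refine ⟨(toWeakSpace ℝ X).symm '' Q, hQc.image _, fun φ ψ hφ hψ hφψ => ?_⟩
  refine ContinuousLinearMap.ext_on hsd fun x hx => ?_
  simpa using hQ _ _ (continuous_comp_toWeakSpace_symm φ).continuousOn
    (continuous_comp_toWeakSpace_symm ψ).continuousOn (fun _ _ h => hφ h) (fun _ _ h => hψ h)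
    (fun v hv => hφψ (mem_image_of_mem _ hv)) (mem_image_of_mem _ hx)

theorem IsWCG.exists_seq_abs_le_tendsto_sub (hX : IsWCG X) {ℓ : ℕ → StrongDual ℝ X} {B K : ℝ}
    (hB : ∀ n, ‖ℓ n‖ ≤ B) (hlim : ∀ x, ∀ ε > 0, ∀ᶠ n in atTop, |ℓ n x| ≤ K * ‖x‖ + ε) :
    ∃ g : ℕ → StrongDual ℝ X, (∀ n x, |g n x| ≤ K * ‖x‖) ∧
      ∀ x, Tendsto (fun n => ℓ n x - g n x) atTop (𝓝 0) := by
  set T : Set (WeakDual ℝ X) := closure (range fun n => StrongDual.toWeakDual (ℓ n))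
  have hTc : IsCompact T :=
    (WeakDual.isCompact_closedBall 0 B).of_isClosed_subset isClosed_closure <|
      closure_minimal (range_subset_iff.2 fun n => by simpa using hB n)
        (WeakDual.isClosed_closedBall 0 B)
  have hclosed : IsClosed {φ : WeakDual ℝ X | (⇑φ).FactorsThrough (fun x n => ℓ n x)} := by
    simp only [Function.FactorsThrough, ofPred_forall]
    exact isClosed_iInter fun x => isClosed_iInter fun y => isClosed_iInter fun _ =>
      isClosed_eq (WeakDual.eval_continuous x) (WeakDual.eval_continuous y)
  have hfac : ∀ φ ∈ T, (⇑φ).FactorsThrough (fun x n => ℓ n x) :=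
    closure_minimal (range_subset_iff.2 fun n x y h => congrFun h n) hclosed
  obtain ⟨Q, hQc, hQ⟩ := hX.exists_countable_eq_of_eqOn_of_factorsThrough ℓ
  have := isCompact_iff_compactSpace.mp hTc
  have : TopologicalSpace.MetrizableSpace T := by
    have := hQc.to_subtype
    refine (Continuous.isClosedEmbedding (f := fun φ : T => fun q : Q => φ.1 q) ?_ ?_)
      |>.isEmbedding.metrizableSpace
    · exact continuous_pi fun q => (WeakDual.eval_continuous q.1).comp continuous_subtype_val
    · exact fun φ ψ h => Subtype.ext <| hQ (WeakDual.toStrongDual φ.1)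
        (WeakDual.toStrongDual ψ.1) (hfac _ φ.2) (hfac _ ψ.2) fun q hq => congrFun h ⟨q, hq⟩
  obtain ⟨γ, hγ, hγu⟩ := exists_mapClusterPt_tendsto_sub
    fun n => (⟨StrongDual.toWeakDual (ℓ n), subset_closure (mem_range_self n)⟩ : T)
  have heval : ∀ x : X, Continuous fun φ : T => φ.1 x := fun x =>
    (WeakDual.eval_continuous x).comp continuous_subtype_val
  refine ⟨fun n => WeakDual.toStrongDual (γ n).1, fun n x => ?_, fun x => hγu _ (heval x)⟩
  refine le_of_forall_pos_le_add fun ε hε => ?_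
  exact (isClosed_le continuous_abs continuous_const).mem_of_mapClusterPt
    ((hγ n).continuousAt_comp (heval x).continuousAt) (hlim x ε hε)

theorem IsQuasilinearWith.apply {Q : ℝ} {F : X → NullSeq} (hF : IsQuasilinearWith Q F) (n : ℕ) :
    IsQuasilinearWith Q fun x => F x n :=
  ⟨fun c x => by simp [hF.1 c x], fun x y => by
    simpa [Real.norm_eq_abs] using (NullSeq.abs_apply_le_norm _ n).trans (hF.2 x y)⟩

theorem IsKSpaceWith.exists_linearMap {K : ℝ} (hX : IsKSpaceWith K X) {f : X → ℝ}
    (hf : IsQuasilinearWith 1 f) : ∃ ℓ : X →ₗ[ℝ] ℝ, ∀ x, |f x - ℓ x| ≤ K * ‖x‖ :=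
  hX f (by simpa using hf.1) (by simpa [Real.norm_eq_abs] using hf.2)

end

theorem K0_c0_finite_of_WCG_KSpace_general {X : Type*} [NormedAddCommGroup X] [NormedSpace ℝ X]
    (K : ℝ) (hWCG : IsWCG X) (hX : IsKSpaceWith K X)
    (F : X → NullSeq) (hF : IsQuasilinearWith 1 F)
    (hFbdd : ∃ C : ℝ, ∀ x : X, ‖F x‖ ≤ C * ‖x‖) :
    ∃ L : X →ₗ[ℝ] NullSeq, ∀ x : X, ‖F x - L x‖ ≤ 2 * (2 * K + 1) * ‖x‖ := by
  obtain ⟨C, hC⟩ := hFbdd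
  choose ℓ hℓ using fun n => hX.exists_linearMap (hF.apply n)
  have hℓF : ∀ n x, |ℓ n x| ≤ |F x n| + K * ‖x‖ := fun n x => by
    linarith [abs_sub_abs_le_abs_sub (ℓ n x) (F x n), abs_sub_comm (ℓ n x) (F x n), hℓ n x]
  have hℓC : ∀ n x, ‖ℓ n x‖ ≤ (C + K) * ‖x‖ := fun n x => by
    linarith [Real.norm_eq_abs (ℓ n x), (NullSeq.abs_apply_le_norm (F x) n).trans (hC x), hℓF n x]
  have hlim : ∀ x, ∀ ε > 0, ∀ᶠ n in atTop, |ℓ n x| ≤ K * ‖x‖ + ε := fun x ε hε => by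
    filter_upwards [(NullSeq.tendsto_atTop (F x)).abs.eventually (eventually_le_nhds (by simpa))]
      with n hn
    linarith [hℓF n x]
  obtain ⟨g, hg, hℓg⟩ := hWCG.exists_seq_abs_le_tendsto_sub
    (ℓ := fun n => (ℓ n).mkContinuous (C + K) (hℓC n))
    (fun n => LinearMap.mkContinuous_norm_le' _ _) hlim
  have hLg : ∀ x, Tendsto (fun n => (ℓ n - (g n : X →ₗ[ℝ] ℝ)) x) atTop (𝓝 0) := hℓg
  refine ⟨NullSeq.linearMapOfTendsto (fun n => ℓ n - (g n : X →ₗ[ℝ] ℝ)) hLg, fun x => ?_⟩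
  have hKx : 0 ≤ K * ‖x‖ := (abs_nonneg _).trans (hℓ 0 x)
  refine NullSeq.norm_le_of_forall_abs_le (by linarith [norm_nonneg x]) fun n => ?_
  calc |(F x - NullSeq.linearMapOfTendsto (fun n => ℓ n - (g n : X →ₗ[ℝ] ℝ)) hLg x) n|
      = |(F x n - ℓ n x) + g n x| := by simp [sub_add]
    _ ≤ K * ‖x‖ + K * ‖x‖ := (abs_add_le _ _).trans (add_le_add (hℓ n x) (hg n x))
    _ ≤ 2 * (2 * K + 1) * ‖x‖ := by linarith [norm_nonneg x]

/-- if `X` is a WCG Banach 𝒦-space with constant `K`, then every bounded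
quasilinear map `F : X → c₀` with constant 1 is at distance at most `2(2K+1)` from a
(not necessarily continuous) linear map; in particular `K₀(X, c₀)` is finite. -/
theorem K0_c0_finite_of_WCG_KSpace {X : Type*} [NormedAddCommGroup X] [NormedSpace ℝ X]
    [CompleteSpace X] (K : ℝ) (hWCG : IsWCG X) (hX : IsKSpaceWith K X)
    (F : X → NullSeq) (hF : IsQuasilinearWith 1 F)
    (hFbdd : ∃ C : ℝ, ∀ x : X, ‖F x‖ ≤ C * ‖x‖) :
    ∃ L : X →ₗ[ℝ] NullSeq, ∀ x : X, ‖F x - L x‖ ≤ 2 * (2 * K + 1) * ‖x‖ :=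
  K0_c0_finite_of_WCG_KSpace_general K hWCG hX F hF hFbdd
end

section
/- Let X be a real Banach space with the λ-bounded approximation property and let Y be a real Banach space complemented in its bidual via a bounded projection p. Suppose C ≥ 0 is such that every bounded quasilinear map G : X → Y with constant 1 admits a (not necessarily continuous) linear map L : X → Y with ‖G(x) − L(x)‖ ≤ C‖x‖ for all x. Then every quasilinear map F : X → Y with constant 1 admits a (not necessarily continuous) linear map L : X → Y with ‖F(x) − L(x)‖ ≤ ‖p‖·C·λ·‖x‖ for all x ∈ X; in particular every quasilinear map from X to Y is trivial and K(X,Y) is finite. -/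
open Finset

/-- `X` has the `λ`-bounded approximation property: every finite-dimensional subspace
is fixed by a finite-rank operator of norm at most `λ`. -/
def HasBAPWith (lam : ℝ) (X : Type*) [NormedAddCommGroup X] [NormedSpace ℝ X] : Prop :=
  ∀ E : Submodule ℝ X, FiniteDimensional ℝ E →
    ∃ u : X →L[ℝ] X, FiniteDimensional ℝ (LinearMap.range (u : X →ₗ[ℝ] X)) ∧
      ‖u‖ ≤ lam ∧ ∀ x ∈ E, u x = x

/-!
A quasilinear map is bounded on finite-dimensional spaces, since its additivity defect on a
sum of `n` vectors grows only linearly in `n`. Given a finite-dimensional `E ⊆ X`, the BAP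
provides a finite-rank `u` with `‖u‖ ≤ λ` fixing `E`, and `λ⁻¹ • (F ∘ u)` is a bounded
quasilinear map with constant 1; hence `F` is within `Cλ‖x‖` of a linear map on `E`. Viewed in
`Y**`, these local linear maps have a weak-* limit along an ultrafilter on the finite subsets of
`X` (Banach–Alaoglu). The limit is linear and within `Cλ‖x‖` of `F`, and composing with `p`
brings it back to `Y` at the cost of the factor `‖p‖`.
-/

open Filter Topology

namespace IsQuasilinearWith

variable {X Y Z : Type*} [NormedAddCommGroup X] [NormedSpace ℝ X]
  [NormedAddCommGroup Y] [NormedSpace ℝ Y] [NormedAddCommGroup Z] [NormedSpace ℝ Z]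
  {Q : ℝ} {F : X → Y}

lemma map_zero (hF : IsQuasilinearWith Q F) : F 0 = 0 := by
  simpa using hF.1 0 0

lemma mono (hF : IsQuasilinearWith Q F) {Q' : ℝ} (hQ : Q ≤ Q') : IsQuasilinearWith Q' F :=
  ⟨hF.1, fun x y => (hF.2 x y).trans (by gcongr)⟩

lemma const_smul (hF : IsQuasilinearWith Q F) (c : ℝ) : IsQuasilinearWith (|c| * Q) (c • F) := by
  refine ⟨fun a x => by simp only [Pi.smul_apply, hF.1, smul_comm c a], fun x y => ?_⟩
  simp only [Pi.smul_apply, ← smul_sub, norm_smul, Real.norm_eq_abs, mul_assoc]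
  gcongr
  exact hF.2 x y

lemma comp_continuousLinearMap (hF : IsQuasilinearWith Q F) (hQ : 0 ≤ Q) (u : Z →L[ℝ] X) :
    IsQuasilinearWith (Q * ‖u‖) (F ∘ u) := by
  refine ⟨fun c z => by simp [hF.1], fun z w => ?_⟩
  calc ‖F (u (z + w)) - F (u z) - F (u w)‖ ≤ Q * (‖u z‖ + ‖u w‖) := by
        simpa only [map_add] using hF.2 (u z) (u w)
    _ ≤ Q * (‖u‖ * ‖z‖ + ‖u‖ * ‖w‖) := by gcongr <;> exact u.le_opNorm _
    _ = Q * ‖u‖ * (‖z‖ + ‖w‖) := by ring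

lemma norm_map_sum_sub_sum_le (hF : IsQuasilinearWith Q F) (hQ : 0 ≤ Q) {ι : Type*}
    (s : Finset ι) (v : ι → X) :
    ‖F (∑ i ∈ s, v i) - ∑ i ∈ s, F (v i)‖ ≤ Q * s.card * ∑ i ∈ s, ‖v i‖ := by
  classical
  induction s using Finset.induction_on with
  | empty => simp [hF.map_zero]
  | insert a s ha ih =>
    rw [Finset.sum_insert ha, Finset.sum_insert ha, Finset.sum_insert ha,
      Finset.card_insert_of_notMem ha]
    calc ‖F (v a + ∑ i ∈ s, v i) - (F (v a) + ∑ i ∈ s, F (v i))‖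
        ≤ ‖F (v a + ∑ i ∈ s, v i) - F (v a) - F (∑ i ∈ s, v i)‖
          + ‖F (∑ i ∈ s, v i) - ∑ i ∈ s, F (v i)‖ := by
          refine (norm_add_le _ _).trans_eq' ?_
          congr 1; abel
      _ ≤ Q * (‖v a‖ + ∑ i ∈ s, ‖v i‖) + Q * s.card * ∑ i ∈ s, ‖v i‖ := by
          gcongr
          exact (hF.2 _ _).trans (by gcongr; exact norm_sum_le _ _)
      _ ≤ Q * ↑(s.card + 1) * (‖v a‖ + ∑ i ∈ s, ‖v i‖) := by
          push_cast
          nlinarith [mul_nonneg (mul_nonneg hQ s.card.cast_nonneg) (norm_nonneg (v a))]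

lemma exists_bound_of_finiteDimensional [FiniteDimensional ℝ X] (hF : IsQuasilinearWith Q F)
    (hQ : 0 ≤ Q) : ∃ M, 0 ≤ M ∧ ∀ x, ‖F x‖ ≤ M * ‖x‖ := by
  let b := Module.finBasis ℝ X
  let n := Module.finrank ℝ X
  let T : X →L[ℝ] Fin n → ℝ := b.equivFunL
  let A : Fin n → ℝ := fun i => Q * n * ‖b i‖ + ‖F (b i)‖
  refine ⟨‖T‖ * ∑ i, A i, by positivity, fun x => ?_⟩
  have hcoord : ∀ i, |b.repr x i| ≤ ‖T‖ * ‖x‖ := fun i =>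
    (norm_le_pi_norm (T x) i).trans (T.le_opNorm x)
  have hx : ∑ i, b.repr x i • b i = x := b.sum_repr x
  calc ‖F x‖ ≤ ‖F x - ∑ i, F (b.repr x i • b i)‖ + ‖∑ i, F (b.repr x i • b i)‖ :=
        norm_le_norm_sub_add _ _
    _ ≤ Q * n * ∑ i, ‖b.repr x i • b i‖ + ∑ i, ‖F (b.repr x i • b i)‖ := by
        gcongr
        · simpa [hx] using hF.norm_map_sum_sub_sum_le hQ Finset.univ fun i => b.repr x i • b i
        · exact norm_sum_le _ _
    _ = ∑ i, |b.repr x i| * A i := by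
        simp only [hF.1, norm_smul, Real.norm_eq_abs, Finset.mul_sum, ← Finset.sum_add_distrib, A]
        refine Finset.sum_congr rfl fun i _ => by ring
    _ ≤ ∑ i, ‖T‖ * ‖x‖ * A i := by gcongr with i; exact hcoord i
    _ = ‖T‖ * (∑ i, A i) * ‖x‖ := by
        simp only [Finset.mul_sum, Finset.sum_mul]; refine Finset.sum_congr rfl fun i _ => by ring

lemma exists_bound_comp_of_finiteDimensional_range
    (hF : IsQuasilinearWith Q F) (hQ : 0 ≤ Q) (u : Z →L[ℝ] X)
    (hu : FiniteDimensional ℝ (LinearMap.range (u : Z →ₗ[ℝ] X))) :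
    ∃ M, ∀ z, ‖F (u z)‖ ≤ M * ‖z‖ := by
  let V := LinearMap.range (u : Z →ₗ[ℝ] X)
  obtain ⟨M, hM0, hM⟩ := ((hF.comp_continuousLinearMap hQ V.subtypeL).mono
    (mul_le_of_le_one_right hQ V.norm_subtypeL_le)).exists_bound_of_finiteDimensional hQ
  refine ⟨M * ‖u‖, fun z => ?_⟩
  calc ‖F (u z)‖ ≤ M * ‖u z‖ := hM ⟨u z, z, rfl⟩
    _ ≤ M * (‖u‖ * ‖z‖) := by gcongr; exact u.le_opNorm z
    _ = M * ‖u‖ * ‖z‖ := by ring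

end IsQuasilinearWith

lemma HasBAPWith.norm_le_mul_norm {lam : ℝ} {X : Type*} [NormedAddCommGroup X] [NormedSpace ℝ X]
    (hBAP : HasBAPWith lam X) (x : X) : ‖x‖ ≤ lam * ‖x‖ := by
  obtain ⟨u, -, hu, hux⟩ := hBAP (ℝ ∙ x) inferInstance
  calc ‖x‖ = ‖u x‖ := by rw [hux x (Submodule.mem_span_singleton_self x)]
    _ ≤ ‖u‖ * ‖x‖ := u.le_opNorm x
    _ ≤ lam * ‖x‖ := by gcongr

lemma HasBAPWith.exists_linearMap_approx_on {lam C : ℝ} {X Y : Type*} [NormedAddCommGroup X]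
    [NormedSpace ℝ X] [NormedAddCommGroup Y] [NormedSpace ℝ Y] (hBAP : HasBAPWith lam X)
    (h0 : ∀ G : X → Y, IsQuasilinearWith 1 G → (∃ M : ℝ, ∀ x : X, ‖G x‖ ≤ M * ‖x‖) →
      ∃ L : X →ₗ[ℝ] Y, ∀ x : X, ‖G x - L x‖ ≤ C * ‖x‖)
    {F : X → Y} (hF : IsQuasilinearWith 1 F) (E : Submodule ℝ X) [FiniteDimensional ℝ E] :
    ∃ L : X →ₗ[ℝ] Y, ∀ x ∈ E, ‖F x - L x‖ ≤ C * lam * ‖x‖ := by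
  obtain ⟨u, hu_fin, hu_norm, hu_fix⟩ := hBAP E inferInstance
  rcases le_or_gt lam 0 with hlam | hlam
  · refine ⟨0, fun x _ => ?_⟩
    have hx : x = 0 := norm_le_zero_iff.mp <| by nlinarith [hBAP.norm_le_mul_norm x, norm_nonneg x]
    simp [hx, hF.map_zero]
  -- `lam⁻¹ • (F ∘ u)` has constant `‖u‖ / lam ≤ 1` and agrees with `lam⁻¹ • F` on `E`.
  have hGq : IsQuasilinearWith 1 (lam⁻¹ • (F ∘ u)) :=
    ((hF.comp_continuousLinearMap zero_le_one u).const_smul lam⁻¹).mono <| by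
      rw [abs_of_pos (inv_pos.mpr hlam), one_mul, inv_mul_le_one₀ hlam]
      exact hu_norm
  have hGb : ∃ M : ℝ, ∀ x, ‖(lam⁻¹ • (F ∘ u)) x‖ ≤ M * ‖x‖ := by
    obtain ⟨M, hM⟩ := hF.exists_bound_comp_of_finiteDimensional_range zero_le_one u hu_fin
    refine ⟨lam⁻¹ * M, fun x => ?_⟩
    rw [Pi.smul_apply, norm_smul, Real.norm_of_nonneg (inv_nonneg.mpr hlam.le), mul_assoc]
    gcongr
    exact hM x
  obtain ⟨L, hL⟩ := h0 _ hGq hGb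
  refine ⟨lam • L, fun x hx => ?_⟩
  have hFx : F x - (lam • L) x = lam • ((lam⁻¹ • (F ∘ u)) x - L x) := by
    simp [hu_fix x hx, smul_sub, smul_smul, hlam.ne']
  rw [hFx, norm_smul, Real.norm_of_nonneg hlam.le, mul_comm C, mul_assoc]
  exact mul_le_mul_of_nonneg_left (hL x) hlam.le

lemma exists_linearMap_bidual_approx_of_forall_finset {X Y : Type*} [AddCommGroup X] [Module ℝ X]
    [NormedAddCommGroup Y] [NormedSpace ℝ Y] (F : X → Y) (r : X → ℝ)
    (hloc : ∀ s : Finset X, ∃ L : X →ₗ[ℝ] Y, ∀ x ∈ s, ‖F x - L x‖ ≤ r x) :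
    ∃ Λ : X →ₗ[ℝ] StrongDual ℝ (StrongDual ℝ Y),
      ∀ x, ‖NormedSpace.inclusionInDoubleDual ℝ Y (F x) - Λ x‖ ≤ r x := by
  choose L hL using hloc
  let ι := NormedSpace.inclusionInDoubleDual ℝ Y
  let ball : X → Set (WeakDual ℝ (StrongDual ℝ Y)) := fun x =>
    WeakDual.toStrongDual ⁻¹' Metric.closedBall (ι (F x)) (r x)
  let Φ : Finset X → X →ₗ[ℝ] WeakDual ℝ (StrongDual ℝ Y) := fun s =>
    StrongDual.toWeakDual.toLinearMap ∘ₗ ι.toLinearMap ∘ₗ L s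
  let 𝒰 := Ultrafilter.of (atTop : Filter (Finset X))
  have hball : ∀ x, ∀ᶠ s in (𝒰 : Filter (Finset X)), Φ s x ∈ ball x := fun x => by
    filter_upwards [Ultrafilter.of_le atTop (Filter.eventually_ge_atTop {x})] with s hs
    rw [Set.mem_preimage, Metric.mem_closedBall, dist_comm]
    calc dist (ι (F x)) (WeakDual.toStrongDual (Φ s x)) = ‖ι (F x - L s x)‖ := by
          rw [map_sub]; exact dist_eq_norm (E := StrongDual ℝ (StrongDual ℝ Y)) _ _
      _ ≤ ‖F x - L s x‖ := NormedSpace.double_dual_bound ℝ Y _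
      _ ≤ r x := hL s x (Finset.singleton_subset_iff.mp hs)
  -- Banach–Alaoglu: the balls are weak-* compact, so each `Φ · x` converges along `𝒰`.
  choose Λ₀ hΛ₀ball hΛ₀ using fun x =>
    (WeakDual.isCompact_closedBall (ι (F x)) (r x)).ultrafilter_le_nhds
      (𝒰.map (Φ · x)) (le_principal_iff.mpr (hball x))
  have hΦ : Tendsto (fun s x => Φ s x) 𝒰 (𝓝 Λ₀) := tendsto_pi_nhds.mpr hΛ₀
  refine ⟨WeakDual.toStrongDual.toLinearMap ∘ₗ linearMapOfTendsto Λ₀ Φ hΦ, fun x => ?_⟩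
  simpa [dist_eq_norm, norm_sub_rev] using hΛ₀ball x

lemma ContinuousLinearMap.norm_sub_apply_le_of_leftInverse {Y Z : Type*} [NormedAddCommGroup Y]
    [NormedSpace ℝ Y] [NormedAddCommGroup Z] [NormedSpace ℝ Z] (p : Z →L[ℝ] Y) {j : Y →L[ℝ] Z}
    (hp : ∀ y, p (j y) = y) (y : Y) (z : Z) : ‖y - p z‖ ≤ ‖p‖ * ‖j y - z‖ := by
  simpa only [map_sub, hp] using p.le_opNorm (j y - z)

theorem K_finite_of_K0_finite_of_BAP_general {X Y : Type*} [NormedAddCommGroup X]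
    [NormedSpace ℝ X] [NormedAddCommGroup Y] [NormedSpace ℝ Y]
    (lam : ℝ) (hBAP : HasBAPWith lam X)
    (p : StrongDual ℝ (StrongDual ℝ Y) →L[ℝ] Y)
    (hp : ∀ y : Y, p (NormedSpace.inclusionInDoubleDual ℝ Y y) = y)
    (C : ℝ)
    (h0 : ∀ G : X → Y, IsQuasilinearWith 1 G → (∃ M : ℝ, ∀ x : X, ‖G x‖ ≤ M * ‖x‖) →
      ∃ L : X →ₗ[ℝ] Y, ∀ x : X, ‖G x - L x‖ ≤ C * ‖x‖)
    (F : X → Y) (hF : IsQuasilinearWith 1 F) :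
    ∃ L : X →ₗ[ℝ] Y, ∀ x : X, ‖F x - L x‖ ≤ @Norm.norm _ (ContinuousLinearMap.hasOpNorm (𝕜 := ℝ) (𝕜₂ := ℝ)
      (E := StrongDual ℝ (StrongDual ℝ Y)) (F := Y) (σ₁₂ := RingHom.id ℝ)) p * C * lam * ‖x‖ := by
  obtain ⟨Λ, hΛ⟩ := exists_linearMap_bidual_approx_of_forall_finset F (fun x => C * lam * ‖x‖)
    fun s => (hBAP.exists_linearMap_approx_on h0 hF (Submodule.span ℝ s)).imp
      fun L hL x hx => hL x (Submodule.subset_span hx)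
  refine ⟨p.toLinearMap ∘ₗ Λ, fun x => ?_⟩
  refine (p.norm_sub_apply_le_of_leftInverse hp (F x) (Λ x)).trans ?_
  rw [mul_assoc, mul_assoc, ← mul_assoc C]
  exact mul_le_mul_of_nonneg_left (hΛ x) (norm_nonneg _)

/-- if `X` has the `λ`-BAP, `Y` is complemented in its bidual by a
projection `p`, and every bounded quasilinear map `X → Y` with constant 1 is at distance
at most `C` from a linear map, then every quasilinear map `F : X → Y` with constant 1 is
at distance at most `‖p‖·C·λ` from a linear map; in particular `K(X,Y)` is finite. -/
theorem K_finite_of_K0_finite_of_BAP {X Y : Type*} [NormedAddCommGroup X]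
    [NormedSpace ℝ X] [CompleteSpace X] [NormedAddCommGroup Y] [NormedSpace ℝ Y]
    [CompleteSpace Y] (lam : ℝ) (hBAP : HasBAPWith lam X)
    (p : StrongDual ℝ (StrongDual ℝ Y) →L[ℝ] Y)
    (hp : ∀ y : Y, p (NormedSpace.inclusionInDoubleDual ℝ Y y) = y)
    (C : ℝ) (hC : 0 ≤ C)
    (h0 : ∀ G : X → Y, IsQuasilinearWith 1 G → (∃ M : ℝ, ∀ x : X, ‖G x‖ ≤ M * ‖x‖) →
      ∃ L : X →ₗ[ℝ] Y, ∀ x : X, ‖G x - L x‖ ≤ C * ‖x‖)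
    (F : X → Y) (hF : IsQuasilinearWith 1 F) :
    ∃ L : X →ₗ[ℝ] Y, ∀ x : X, ‖F x - L x‖ ≤ @Norm.norm _ (ContinuousLinearMap.hasOpNorm (𝕜 := ℝ) (𝕜₂ := ℝ)
      (E := StrongDual ℝ (StrongDual ℝ Y)) (F := Y) (σ₁₂ := RingHom.id ℝ)) p * C * lam * ‖x‖ :=
  K_finite_of_K0_finite_of_BAP_general lam hBAP p hp C h0 F hF
end
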